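/- Let S, T be nonisomorphic simple left R-modules over a k-algebra R (k algebraically closed) with End_R(S) ≅ End_R(T) ≅ k. If dim_k Ext^1_R(S,T) ≥ 2, then there exist two non-split extensions U, V of S by T such that U and V are non-isomorphic as R-modules. -/

import Mathlib

open CategoryTheory

variable (k R : Type) [Field k] [Ring R] [Algebra k R]

/-- For a `k`-algebra `R`, the category of `R`-modules is `k`-linear: scalars act on
hom-groups through the algebra map `k → R`, which is central. -/
noncomputable instance ModuleCat.algLinear : Linear k (ModuleCat.{0} R) where
  homModule M N :=
    letI : Module k N := Module.compHom N (algebraMap k R)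
    haveI : SMulCommClass R k N := ⟨fun r c n => by
      show r • (algebraMap k R c • n) = algebraMap k R c • r • n
      rw [smul_smul, smul_smul, Algebra.commutes]⟩
    ModuleCat.Hom.instModule
  smul_comp := by intros X Y Z c f g; ext x; exact map_smul g.hom (algebraMap k R c) _
  comp_smul := by intros; ext; rfl

/-- `Ext¹_R(M, N)`, as a `k`-vector space, for `R` a `k`-algebra. -/
noncomputable def ext1 (M N : ModuleCat.{0} R) : ModuleCat k :=
  ((Ext k (ModuleCat.{0} R) 1).obj (Opposite.op M)).obj N

variable {k R}

/-- `0 → T → E → S → 0` is a short exact sequence: `E` is an extension of `S` by `T`. -/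
def IsExtension {T E S : ModuleCat.{0} R} (ι : T ⟶ E) (π : E ⟶ S) : Prop :=
  Function.Injective ι ∧ Function.Surjective π ∧ LinearMap.range ι.hom = LinearMap.ker π.hom

/-- The extension `0 → T → E → S → 0` is split. -/
def IsSplit {T E S : ModuleCat.{0} R} (_ι : T ⟶ E) (π : E ⟶ S) : Prop :=
  ∃ σ : S ⟶ E, σ ≫ π = 𝟙 S

/-- Every endomorphism of `M` is a scalar: `End_R(M) ≅ k`. -/
def EndIsScalar (k : Type) [Field k] {R : Type} [Ring R] [Algebra k R]
    (M : ModuleCat.{0} R) : Prop :=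
  ∀ f : M ⟶ M, ∃ c : k, f = c • 𝟙 M

/-!
Compute `Ext¹(S, T)` from a projective resolution `P → S`: a class is represented by a cocycle
`f : P₁ → T`, and the pushout of `P₁ → P₀` along `f` is an extension `E_f` of `S` by `T` which
splits only when `f` is a coboundary. Take cocycles `f`, `g` with linearly independent classes.
Since `Hom(T, S) = 0` by Schur's lemma, an isomorphism `E_f ≅ E_g` maps `T` into `T`, so it is a
morphism of extensions, acting on `T` and on `S` by scalars `α` and `β ≠ 0`. Comparing it with the
pushout squares gives `β [g] = α [f]`, a contradiction.
-/

open Limits Module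

namespace CategoryTheory.ShortComplex

variable {C : Type*} [Category C] [Preadditive C] [Balanced C]

theorem Exact.exists_hom_τ₂_eq {E₁ E₂ : ShortComplex C} (h₁ : E₁.Exact) [Epi E₁.g]
    (h₂ : E₂.Exact) [Mono E₂.f] (φ : E₁.X₂ ⟶ E₂.X₂) (hφ : E₁.f ≫ φ ≫ E₂.g = 0) :
    ∃ m : E₁ ⟶ E₂, m.τ₂ = φ :=
  ⟨{ τ₁ := h₂.lift (E₁.f ≫ φ) (by simpa using hφ)
     τ₂ := φ
     τ₃ := h₁.desc (φ ≫ E₂.g) hφ }, rfl⟩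

theorem Exact.exists_eq_comp_of_section {E : ShortComplex C} (hE : E.Exact) (hf : Mono E.f)
    {P₀ P₁ : C} {d : P₁ ⟶ P₀} {f : P₁ ⟶ E.X₁} {ρ : P₀ ⟶ E.X₂} (hρ : d ≫ ρ = f ≫ E.f)
    (s : E.X₃ ⟶ E.X₂) (hs : s ≫ E.g = 𝟙 E.X₃) : ∃ e : P₀ ⟶ E.X₁, f = d ≫ e :=
  let σ := Splitting.ofExactOfSection E hE s hs hf
  ⟨ρ ≫ σ.r, by rw [← Category.assoc, hρ, Category.assoc, σ.f_r, Category.comp_id]⟩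

theorem Exact.exists_comp_sub_comp_eq_comp {E₁ E₂ : ShortComplex C} (h₂ : E₂.Exact) [Mono E₂.f]
    (m : E₁ ⟶ E₂) {P₀ P₁ : C} {d : P₁ ⟶ P₀} {f : P₁ ⟶ E₁.X₁} {g : P₁ ⟶ E₂.X₁}
    {ρ₁ : P₀ ⟶ E₁.X₂} {ρ₂ : P₀ ⟶ E₂.X₂} (hρ₁ : d ≫ ρ₁ = f ≫ E₁.f) (hρ₂ : d ≫ ρ₂ = g ≫ E₂.f)
    {b₀ : P₀ ⟶ P₀} {b₁ : P₁ ⟶ P₁} (hb : b₀ ≫ ρ₂ ≫ E₂.g = ρ₁ ≫ E₁.g ≫ m.τ₃)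
    (hd : b₁ ≫ d = d ≫ b₀) : ∃ e : P₀ ⟶ E₂.X₁, b₁ ≫ g - f ≫ m.τ₁ = d ≫ e := by
  refine ⟨h₂.lift (b₀ ≫ ρ₂ - ρ₁ ≫ m.τ₂) (by simp [hb, m.comm₂₃]), ?_⟩
  rw [← cancel_mono E₂.f]
  simp only [Preadditive.sub_comp, Category.assoc, Exact.lift_f, Preadditive.comp_sub, m.comm₁₂,
    ← hρ₂, ← reassoc_of% hd, reassoc_of% hρ₁]

end CategoryTheory.ShortComplex

theorem CategoryTheory.ShortComplex.exists_cycles_linearIndependent_of_two_le_finrank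
    {K : Type*} [Field K] (X : ShortComplex (ModuleCat K))
    (h : 2 ≤ finrank K X.homology) :
    ∃ x y : X.X₂, X.g x = 0 ∧ X.g y = 0 ∧
      ∀ a b : K, a • x + b • y ∈ LinearMap.range X.f.hom → a = 0 ∧ b = 0 := by
  rw [X.moduleCatHomologyIso.toLinearEquiv.finrank_eq] at h
  obtain ⟨u, hu⟩ : ∃ u : Fin 2 → LinearMap.ker X.g.hom ⧸ LinearMap.range X.moduleCatToCycles,
      LinearIndependent K u :=
    exists_linearIndependent_of_le_finrank h
  rw [show u = ![u 0, u 1] by ext i; fin_cases i <;> rfl, LinearIndependent.pair_iff] at hu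
  obtain ⟨⟨x, hx⟩, hux⟩ := Submodule.Quotient.mk_surjective _ (u 0)
  obtain ⟨⟨y, hy⟩, huy⟩ := Submodule.Quotient.mk_surjective _ (u 1)
  refine ⟨x, y, hx, hy, fun a b ⟨z, hz⟩ => hu a b ?_⟩
  rw [← hux, ← huy, ← Submodule.Quotient.mk_smul, ← Submodule.Quotient.mk_smul,
    ← Submodule.Quotient.mk_add, Submodule.Quotient.mk_eq_zero]
  exact ⟨z, Subtype.ext hz⟩

theorem CategoryTheory.ProjectiveResolution.exists_cocycles_linearIndependent
    {k C : Type*} [Field k] [Category C] [Abelian C] [Linear k C] [EnoughProjectives C] {S : C}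
    (P : ProjectiveResolution S) (T : C)
    (h : 2 ≤ finrank k (((Ext k C 1).obj (Opposite.op S)).obj T)) :
    ∃ f g : P.complex.X 1 ⟶ T, P.complex.d 2 1 ≫ f = 0 ∧ P.complex.d 2 1 ≫ g = 0 ∧
      ∀ a b : k, (∃ e, a • f + b • g = P.complex.d 1 0 ≫ e) → a = 0 ∧ b = 0 := by
  have hprev : (ComplexShape.up ℕ).prev 1 = 0 := CochainComplex.prev_nat_succ 0
  have hnext : (ComplexShape.up ℕ).next 1 = 2 := by simp [CochainComplex.next]
  rw [((P.isoExt 1 T ≪≫ HomologicalComplex.homologyIsoSc' _ 0 1 2 hprev hnext).toLinearEquiv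
    ).finrank_eq] at h
  obtain ⟨f, g, hf, hg, hfg⟩ := ShortComplex.exists_cycles_linearIndependent_of_two_le_finrank _ h
  exact ⟨f, g, hf, hg, fun a b ⟨e, he⟩ => hfg a b ⟨e, he.symm⟩⟩

namespace ModuleCat

universe u v

variable {R : Type u} [Ring R] {T S P₀ P₁ : ModuleCat.{v} R}

theorem hom_eq_zero_of_isEmpty_linearEquiv [IsSimpleModule R T] [IsSimpleModule R S]
    (hST : IsEmpty (S ≃ₗ[R] T)) (w : T ⟶ S) : w = 0 :=
  (LinearMap.bijective_or_eq_zero w.hom).elim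
    (fun hw => hST.elim (LinearEquiv.ofBijective _ hw).symm) (fun hw => hom_ext hw)

variable (d : P₁ ⟶ P₀) (f : P₁ ⟶ T)

def cocyclePushout : ModuleCat.{v} R :=
  of R ((T × P₀) ⧸ LinearMap.range (f.hom.prod (-d.hom)))

namespace cocyclePushout

def inl : T ⟶ cocyclePushout d f :=
  ofHom ((LinearMap.range (f.hom.prod (-d.hom))).mkQ ∘ₗ LinearMap.inl R T P₀)

def inr : P₀ ⟶ cocyclePushout d f :=
  ofHom ((LinearMap.range (f.hom.prod (-d.hom))).mkQ ∘ₗ LinearMap.inr R T P₀)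

theorem condition : d ≫ inr d f = f ≫ inl d f := by
  refine hom_ext (LinearMap.ext fun x => (Submodule.Quotient.eq _).2 ⟨-x, ?_⟩)
  simpa using ⟨rfl, rfl⟩

variable {d}

def desc (π₀ : P₀ ⟶ S) (hd : d ≫ π₀ = 0) : cocyclePushout d f ⟶ S :=
  ofHom ((LinearMap.range (f.hom.prod (-d.hom))).liftQ (π₀.hom ∘ₗ LinearMap.snd R T P₀) <| by
    rintro _ ⟨x, rfl⟩
    simpa using congr($hd x))

@[simp]
theorem inr_desc (π₀ : P₀ ⟶ S) (hd : d ≫ π₀ = 0) : inr d f ≫ desc f π₀ hd = π₀ := rfl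

@[simp]
theorem inl_desc (π₀ : P₀ ⟶ S) (hd : d ≫ π₀ = 0) : inl d f ≫ desc f π₀ hd = 0 := by
  ext t
  exact map_zero π₀.hom

end cocyclePushout

open cocyclePushout

variable {d f}

theorem cocyclePushout_shortExact {π₀ : P₀ ⟶ S} (hd : d ≫ π₀ = 0)
    (hf : LinearMap.ker d.hom ≤ LinearMap.ker f.hom) (hπ₀ : Function.Surjective π₀)
    (h₀ : LinearMap.range d.hom = LinearMap.ker π₀.hom) :
    (ShortComplex.mk (inl d f) (desc f π₀ hd) (inl_desc f π₀ hd)).ShortExact := by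
  refine .mk' ?_ ((mono_iff_injective _).2 ?_) ((epi_iff_surjective _).2 ?_)
  · rw [ShortComplex.moduleCat_exact_iff_ker_sub_range]
    intro e he
    obtain ⟨⟨t, p⟩, rfl⟩ := Submodule.Quotient.mk_surjective _ e
    obtain ⟨x, rfl⟩ : p ∈ LinearMap.range d.hom := h₀ ▸ he
    refine ⟨t + f x, (Submodule.Quotient.eq _).2 ⟨x, ?_⟩⟩
    simp
  · refine (injective_iff_map_eq_zero _).2 fun t ht => ?_
    obtain ⟨x, hx⟩ := (Submodule.Quotient.mk_eq_zero _).1 ht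
    obtain ⟨rfl, hdx⟩ := Prod.ext_iff.1 hx
    exact hf (neg_eq_zero.1 hdx)
  · intro s
    obtain ⟨p, rfl⟩ := hπ₀ s
    exact ⟨inr d f p, rfl⟩

end ModuleCat

theorem CategoryTheory.ShortComplex.ShortExact.isExtension {E : ShortComplex (ModuleCat.{0} R)}
    (hE : E.ShortExact) : IsExtension E.f E.g :=
  ⟨hE.moduleCat_injective_f, hE.moduleCat_surjective_g, hE.exact.moduleCat_range_eq_ker⟩

namespace ModuleCat.cocyclePushout

theorem exists_smul_sub_smul_eq_comp_of_iso {S T P₀ P₁ : ModuleCat.{0} R}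
    [IsSimpleModule R S] [IsSimpleModule R T] (hST : IsEmpty (S ≃ₗ[R] T))
    (hS : EndIsScalar k S) (hT : EndIsScalar k T) {d : P₁ ⟶ P₀} {π₀ : P₀ ⟶ S}
    (hd : d ≫ π₀ = 0) (hπ₀ : Function.Surjective π₀)
    (h₀ : LinearMap.range d.hom = LinearMap.ker π₀.hom) {f g : P₁ ⟶ T}
    (hf : LinearMap.ker d.hom ≤ LinearMap.ker f.hom)
    (hg : LinearMap.ker d.hom ≤ LinearMap.ker g.hom)
    (φ : cocyclePushout d f ≅ cocyclePushout d g) :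
    ∃ α β : k, β ≠ 0 ∧ ∃ e : P₀ ⟶ T, β • g - α • f = d ≫ e := by
  have h₁ := cocyclePushout_shortExact hd hf hπ₀ h₀
  have h₂ := cocyclePushout_shortExact hd hg hπ₀ h₀
  have := h₁.epi_g
  have := h₂.mono_f
  obtain ⟨m, hm⟩ := h₁.exact.exists_hom_τ₂_eq h₂.exact φ.hom
    (hom_eq_zero_of_isEmpty_linearEquiv hST _)
  obtain ⟨α, hα⟩ := hT m.τ₁
  obtain ⟨β, hβ⟩ := hS m.τ₃
  have hβ0 : β ≠ 0 := by
    rintro rfl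
    have : Nontrivial S := IsSimpleModule.nontrivial R S
    have : Epi (desc g π₀ hd) := h₂.epi_g
    have hzero : φ.hom ≫ desc g π₀ hd = desc f π₀ hd ≫ m.τ₃ := hm ▸ m.comm₂₃
    rw [hβ, zero_smul, Limits.comp_zero] at hzero
    have : Epi (0 : cocyclePushout d f ⟶ S) := hzero ▸ inferInstance
    exact not_subsingleton S
      (isZero_iff_subsingleton.1 (IsZero.of_epi_zero (cocyclePushout d f) S))
  obtain ⟨e, he⟩ := h₂.exact.exists_comp_sub_comp_eq_comp m (condition d f) (condition d g)
    (b₀ := β • 𝟙 P₀) (b₁ := β • 𝟙 P₁) (by simp [hβ]) (by simp)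
  exact ⟨α, β, hβ0, e, by simpa [hα] using he⟩

end ModuleCat.cocyclePushout

theorem stmt4_general (k R : Type) [Field k] [Ring R] [Algebra k R]
    (S T : ModuleCat.{0} R) [IsSimpleModule R S] [IsSimpleModule R T]
    (hST : IsEmpty (S ≃ₗ[R] T))
    (hS : EndIsScalar k S) (hT : EndIsScalar k T)
    (hdim : 2 ≤ Module.finrank k (ext1 k R S T)) :
    ∃ (U V : ModuleCat.{0} R) (ιU : T ⟶ U) (πU : U ⟶ S) (ιV : T ⟶ V) (πV : V ⟶ S),
      IsExtension ιU πU ∧ IsExtension ιV πV ∧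
      ¬ IsSplit ιU πU ∧ ¬ IsSplit ιV πV ∧ IsEmpty (U ≃ₗ[R] V) := by
  obtain ⟨P⟩ : Nonempty (ProjectiveResolution S) := HasProjectiveResolution.out
  obtain ⟨f, g, hf, hg, hfg⟩ := P.exists_cocycles_linearIndependent T hdim
  have hd : P.complex.d 1 0 ≫ P.π.f 0 = 0 := P.complex_d_comp_π_f_zero
  have hπ₀ : Function.Surjective (P.π.f 0) := (ModuleCat.epi_iff_surjective _).1 inferInstance
  have h₀ := P.exact₀.moduleCat_range_eq_ker
  have hker : ∀ c : P.complex.X 1 ⟶ T, P.complex.d 2 1 ≫ c = 0 →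
      LinearMap.ker (P.complex.d 1 0).hom ≤ LinearMap.ker c.hom := fun c hc =>
    (P.exact_succ 0).moduleCat_range_eq_ker ▸ LinearMap.range_le_ker_iff.2 congr(($hc).hom)
  have hE := fun c hc => ModuleCat.cocyclePushout_shortExact hd (hker c hc) hπ₀ h₀
  refine ⟨_, _, _, _, _, _, (hE f hf).isExtension, (hE g hg).isExtension, ?_, ?_, ⟨fun φ => ?_⟩⟩
  · rintro ⟨s, hs⟩
    obtain ⟨e, he⟩ := (hE f hf).exact.exists_eq_comp_of_section (hE f hf).mono_f
      (ModuleCat.cocyclePushout.condition _ f) s hs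
    exact one_ne_zero (hfg 1 0 ⟨e, by simpa using he⟩).1
  · rintro ⟨s, hs⟩
    obtain ⟨e, he⟩ := (hE g hg).exact.exists_eq_comp_of_section (hE g hg).mono_f
      (ModuleCat.cocyclePushout.condition _ g) s hs
    exact one_ne_zero (hfg 0 1 ⟨e, by simpa using he⟩).2
  · obtain ⟨α, β, hβ, e, he⟩ :=
      ModuleCat.cocyclePushout.exists_smul_sub_smul_eq_comp_of_iso hST hS hT hd hπ₀ h₀
      (hker f hf) (hker g hg) φ.toModuleIso
    exact hβ (hfg (-α) β ⟨e, by rw [neg_smul, neg_add_eq_sub, he]⟩).2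

theorem stmt4 (k R : Type) [Field k] [IsAlgClosed k] [Ring R] [Algebra k R]
    (S T : ModuleCat.{0} R) [IsSimpleModule R S] [IsSimpleModule R T]
    (hST : IsEmpty (S ≃ₗ[R] T))
    (hS : EndIsScalar k S) (hT : EndIsScalar k T)
    (hdim : 2 ≤ Module.finrank k (ext1 k R S T)) :
    ∃ (U V : ModuleCat.{0} R) (ιU : T ⟶ U) (πU : U ⟶ S) (ιV : T ⟶ V) (πV : V ⟶ S),
      IsExtension ιU πU ∧ IsExtension ιV πV ∧
      ¬ IsSplit ιU πU ∧ ¬ IsSplit ιV πV ∧ IsEmpty (U ≃ₗ[R] V) :=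
  stmt4_general k R S T hST hS hT hdim
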